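/- Suppose the directed graph G = (V,E) satisfies Condition S. Then for every F ⊆ V with |F| ≤ f, the unique source component S_F of G_F satisfies |S_F| ≥ 2f + 1 − |F|. -/

import Mathlib

/-- Edge relation of the induced subgraph `G_F` (both endpoints avoid `F`). -/
def stepRel {V : Type*} (E : V → V → Prop) (F : Set V) (a b : V) : Prop :=
  a ∉ F ∧ b ∉ F ∧ E a b

/-- `reachSet E F u`: vertices `w ∉ F` having a directed path (possibly trivial)
to `u` that uses only vertices outside `F`. -/
def reachSet {V : Type*} (E : V → V → Prop) (F : Set V) (u : V) : Set V :=
  {w | w ∉ F ∧ Relation.ReflTransGen (stepRel E F) w u}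

/-- `S` is a source component of the induced subgraph `G_F`: it is a strongly
connected component of `G_F` (an equivalence class of mutual reachability,
i.e. a maximal mutually-connected set), with no incoming edges of `G_F` from
vertices outside `S`. -/
def IsSourceComponent {V : Type*} (E : V → V → Prop) (F : Set V) (S : Set V) : Prop :=
  (∃ v ∉ F, S = {w | Relation.ReflTransGen (stepRel E F) v w ∧
                     Relation.ReflTransGen (stepRel E F) w v}) ∧
  ∀ a ∉ S, ∀ b ∈ S, ¬ stepRel E F a b

/-- Condition S: for every `F` with `|F| ≤ f`, the graph `G_F` has a unique
source component, and that source component has at least `f+1` vertices. -/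
def ConditionS {V : Type*} (E : V → V → Prop) (f : ℕ) : Prop :=
  ∀ F : Set V, F.ncard ≤ f →
    ∃ S : Set V, IsSourceComponent E F S ∧ f + 1 ≤ S.ncard ∧
      ∀ S' : Set V, IsSourceComponent E F S' → S' = S

/-!
Let `S` be a source component of `G_F` and remove from it a set `A` of `f - |F|` further
vertices; `S \ A` is nonempty since `|S| ≥ f + 1`. As no edge of `G_F` enters `S`, every
vertex of `G_{F ∪ A}` that reaches a vertex of `S \ A` lies in `S \ A`, and following
reachability backwards from such a vertex to a minimal reachability set produces a source
component of `G_{F ∪ A}` inside `S \ A`. Since `|F ∪ A| ≤ f`, Condition S bounds its size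
by `f + 1` from below, so `|S| - (f - |F|) ≥ f + 1`.
-/

open Relation

section

variable {V : Type*} {E : V → V → Prop} {F S : Set V}

lemma notMem_of_reflTransGen_stepRel {x y : V} (h : ReflTransGen (stepRel E F) x y)
    (hy : y ∉ F) : x ∉ F := by
  rcases h.cases_head with rfl | ⟨c, hxc, -⟩
  · exact hy
  · exact hxc.1

lemma reachSet_subset_of_mem {u w : V} (hw : w ∈ reachSet E F u) :
    reachSet E F w ⊆ reachSet E F u :=
  fun _ ⟨hx, hxw⟩ => ⟨hx, hxw.trans hw.2⟩

lemma stepRel_anti {F' : Set V} (hFF' : F ⊆ F') {a b : V} (h : stepRel E F' a b) :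
    stepRel E F a b :=
  ⟨fun ha => h.1 (hFF' ha), fun hb => h.2.1 (hFF' hb), h.2.2⟩

lemma reachSet_anti {F' : Set V} (hFF' : F ⊆ F') (u : V) :
    reachSet E F' u ⊆ reachSet E F u :=
  fun _ ⟨hx, hxu⟩ =>
    ⟨fun h => hx (hFF' h), ReflTransGen.mono (fun _ _ => stepRel_anti hFF') _ _ hxu⟩

lemma exists_isSourceComponent_subset_reachSet [Finite V] (E : V → V → Prop) {b : V}
    (hb : b ∉ F) : ∃ S, IsSourceComponent E F S ∧ S ⊆ reachSet E F b := by
  -- A vertex `w` whose reachability set is inclusion-minimal is reached back by anything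
  -- reaching it, so its strongly connected component has no incoming edges.
  obtain ⟨w, hw, hmin⟩ := Set.Finite.exists_minimalFor (reachSet E F) (reachSet E F b)
    (Set.toFinite _) ⟨b, hb, .refl⟩
  refine ⟨_, ⟨⟨w, hw.1, rfl⟩, ?_⟩, ?_⟩
  · rintro a haS c ⟨-, hcw⟩ hac
    have haw : ReflTransGen (stepRel E F) a w := (ReflTransGen.single hac).trans hcw
    have ha : a ∈ reachSet E F w := ⟨hac.1, haw⟩
    have hwa : w ∈ reachSet E F a :=
      hmin (reachSet_subset_of_mem hw ha) (reachSet_subset_of_mem ha) ⟨hw.1, .refl⟩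
    exact haS ⟨hwa.2, haw⟩
  · rintro x ⟨-, hxw⟩
    exact ⟨notMem_of_reflTransGen_stepRel hxw hw.1, hxw.trans hw.2⟩

namespace IsSourceComponent

lemma notMem (hS : IsSourceComponent E F S) {w : V} (hw : w ∈ S) : w ∉ F := by
  obtain ⟨⟨v, hv, rfl⟩, -⟩ := hS
  exact notMem_of_reflTransGen_stepRel hw.2 hv

lemma reachSet_subset (hS : IsSourceComponent E F S) {u : V} (hu : u ∈ S) :
    reachSet E F u ⊆ S := by
  rintro x ⟨-, hxu⟩
  induction hxu using ReflTransGen.head_induction_on with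
  | refl => exact hu
  | head hyc _ hc => exact by_contra fun hy => hS.2 _ hy _ hc hyc

lemma exists_isSourceComponent_union_subset_diff [Finite V] (hS : IsSourceComponent E F S)
    {A : Set V} (hSA : (S \ A).Nonempty) :
    ∃ T, IsSourceComponent E (F ∪ A) T ∧ T ⊆ S \ A := by
  obtain ⟨b, hbS, hbA⟩ := hSA
  have hb : b ∉ F ∪ A := by
    rintro (h | h)
    exacts [hS.notMem hbS h, hbA h]
  obtain ⟨T, hT, hTb⟩ := exists_isSourceComponent_subset_reachSet E hb
  refine ⟨T, hT, fun x hx => ⟨?_, fun h => (hTb hx).1 (Or.inr h)⟩⟩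
  exact hS.reachSet_subset hbS (reachSet_anti Set.subset_union_left b (hTb hx))

end IsSourceComponent

lemma ConditionS.le_ncard {f : ℕ} (hCS : ConditionS E f) (hF : F.ncard ≤ f)
    (hS : IsSourceComponent E F S) : f + 1 ≤ S.ncard := by
  obtain ⟨S₀, -, hcard, huniq⟩ := hCS F hF
  rwa [huniq S hS]

end

theorem source_component_size_lower_bound_general {V : Type*} [Fintype V]
    (E : V → V → Prop) (f : ℕ)
    (hCS : ConditionS E f) :
    ∀ F : Set V, F.ncard ≤ f → ∀ S : Set V, IsSourceComponent E F S →
      2 * f + 1 - F.ncard ≤ S.ncard := by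
  intro F hF S hS
  have hSf : f + 1 ≤ S.ncard := hCS.le_ncard hF hS
  obtain ⟨A, hAS, hA⟩ := Set.exists_subset_card_eq (show f - F.ncard ≤ S.ncard by omega)
  have hSA : (S \ A).ncard = S.ncard - A.ncard := Set.ncard_sdiff hAS
  have hFA : (F ∪ A).ncard ≤ f := (Set.ncard_union_le F A).trans (by omega)
  obtain ⟨T, hT, hTSA⟩ := hS.exists_isSourceComponent_union_subset_diff (A := A)
    (Set.nonempty_of_ncard_ne_zero (by omega))
  have hTf : f + 1 ≤ T.ncard := hCS.le_ncard hFA hT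
  have hTle : T.ncard ≤ (S \ A).ncard := Set.ncard_le_ncard hTSA
  omega

theorem source_component_size_lower_bound {V : Type*} [Fintype V]
    (E : V → V → Prop) (f : ℕ) (hf : 0 < f) (hfn : f < Fintype.card V)
    (hCS : ConditionS E f) :
    ∀ F : Set V, F.ncard ≤ f → ∀ S : Set V, IsSourceComponent E F S →
      2 * f + 1 - F.ncard ≤ S.ncard :=
  source_component_size_lower_bound_general E f hCS
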